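/- For 0 ≤ d ≤ n-1, the map ρ_{n,d} defined by γ'NE D^j NNEE γ'' ↦ γ'NDE D^j NE γ'' and D^j NNEE γ' NE NE ↦ D^j NNEE γ' D NE is a bijection from the set of area-1 Schröder paths with d diagonal steps of the form {γ = D^j NNEE γ' NE NE or γ = γ' NE D^j NNEE γ''} onto the corresponding set with d+1 diagonal steps {γ = D^j NNEE γ' D NE or γ = γ' NDE D^j NE γ''}, and it satisfies bounce(ρ_{n,d}(γ)) = bounce(γ) - 1. -/

import Mathlib

open scoped Classical

inductive Step : Type
  | N | E | D
deriving DecidableEq, Repr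

instance : Fintype Step :=
  ⟨{Step.N, Step.E, Step.D}, by intro x; cases x <;> simp⟩

open Step

/-- number of occurrences of the letter `s` in the word `w` -/
def cnt (s : Step) (w : List Step) : ℕ := w.count s

/-- Schröder (or Dyck, if no `D`s) path in an `n × n` grid: every prefix has at
least as many `N`s as `E`s, and the totals agree. -/
def IsSchroeder (w : List Step) : Prop :=
  (∀ p : List Step, p <+: w → cnt E p ≤ cnt N p) ∧ cnt N w = cnt E w

/-- words that are concatenations of blocks `NE` and `D` -/
inductive IsNED : List Step → Prop
  | nil : IsNED []
  | ne {w} : IsNED w → IsNED (N :: E :: w)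
  | d {w} : IsNED w → IsNED (D :: w)

/-- area of a Schröder path: the number of lower triangles between the path and the
main diagonal, computed as the sum over `N` and `D` steps of the height
`#N - #E` of the starting point of the step above the diagonal. -/
def areaAux : ℕ → List Step → ℕ
  | _, [] => 0
  | h, N :: w => h + areaAux (h+1) w
  | h, D :: w => h + areaAux h w
  | h, E :: w => areaAux (h-1) w

def area (w : List Step) : ℕ := areaAux 0 w

/-- area of an `N/E` lattice path in a rectangular grid: the number of boxes under
the path, i.e. the sum over `E` steps of the number of `N` steps before it. -/
def areaNEAux : ℕ → List Step → ℕ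
  | _, [] => 0
  | h, N :: w => areaNEAux (h+1) w
  | h, E :: w => h + areaNEAux h w
  | h, D :: w => areaNEAux h w

def areaNE (w : List Step) : ℕ := areaNEAux 0 w

/-- number of `N`s occurring before the `(j+1)`-st `E` (`j` is 0-indexed);
this is the height of the path above the horizontal interval `[j, j+1]`. -/
def nBefore : List Step → ℕ → ℕ
  | [], _ => 0
  | N :: w, j => 1 + nBefore w j
  | E :: w, j => if j = 0 then 0 else nBefore w (j-1)
  | D :: w, j => nBefore w j

/-- number of `E`s occurring before the `(i+1)`-st `N` (`i` is 0-indexed). -/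
def eBefore : List Step → ℕ → ℕ
  | [], _ => 0
  | E :: w, i => 1 + eBefore w i
  | N :: w, i => if i = 0 then 0 else eBefore w (i-1)
  | D :: w, i => eBefore w i

/-- number of `D`s occurring after the `e`-th `E` (`e` is 1-indexed). -/
def dAfterE : List Step → ℕ → ℕ
  | [], _ => 0
  | E :: w, e => if e ≤ 1 then cnt D w else dAfterE w (e-1)
  | D :: w, e => dAfterE w e
  | N :: w, e => dAfterE w e

/-- Combined computation of `bounce(Γ(γ)) + numph(γ)` along the bounce path of
`Γ(γ)`.  Here `g` is the Schröder path, `w = Γ(g)` is the underlying Dyck path,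
`nn` its size; the bounce path has corners (peaks) at the positions
`j₀ = 0, jₖ₊₁ = nBefore w jₖ`; each intermediate return `jₖ₊₁ < nn` contributes
`nn - jₖ₊₁` to the bounce of `Γ(g)`, and the peak with corner at `jₖ` is the start
of the `(jₖ+1)`-st east step, contributing to numph the number of diagonal steps of
`g` above it, i.e. after that east step. -/
def bounceAux (g w : List Step) (nn : ℕ) : ℕ → ℕ → ℕ
  | 0, _ => 0
  | fuel+1, j =>
      dAfterE g (j+1) +
        (if nn ≤ nBefore w j ∨ nBefore w j ≤ j then 0
         else (nn - nBefore w j) + bounceAux g w nn fuel (nBefore w j))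

/-- the bounce statistic of a Schröder path: `bounce(Γ(γ)) + numph(γ)` -/
def bounce (g : List Step) : ℕ :=
  let w := g.filter (fun s => s ≠ D)
  let nn := cnt E w
  if nn = 0 then 0 else bounceAux g w nn g.length 0

/-- the (signed) area coordinate `a_i = m·i - (#E before the (i+1)-st N)` of line `i`
(0-indexed) for a path in an `n × mn` grid. -/
def aLine (m : ℕ) (g : List Step) (i : ℕ) : ℤ := (m : ℤ) * i - eBefore g i

/-- an `(n, mn)`-Dyck path: `n` north steps, `mn` east steps, no diagonal steps,
staying weakly above the main diagonal. -/
def IsParkingPath (n m : ℕ) (g : List Step) : Prop :=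
  (∀ s ∈ g, s ≠ D) ∧ cnt N g = n ∧ cnt E g = m * n ∧
    ∀ p : List Step, p <+: g → cnt E p ≤ m * cnt N p

/-- an `(n, mn)`-parking function: an `(n,mn)`-Dyck path labelled by a permutation
`w` of `{0, …, n-1}` whose labels increase within each column. -/
def IsParking (n m : ℕ) (g : List Step) (w : Fin n → Fin n) : Prop :=
  IsParkingPath n m g ∧ Function.Bijective w ∧
    ∀ i j : Fin n, (j : ℕ) = (i : ℕ) + 1 → eBefore g (i : ℕ) = eBefore g (j : ℕ) → w i < w j

/-- the diagonal inversion statistic of an `(n, mn)`-parking function -/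
def dinv (n m : ℕ) (g : List Step) (w : Fin n → Fin n) : ℤ :=
  ∑ i : Fin n, ∑ j : Fin n,
    if (i : ℕ) < (j : ℕ) then
      (if w i < w j then max 0 ((m : ℤ) - |aLine m g (i : ℕ) - aLine m g (j : ℕ)|) else 0) +
        (if w j < w i then max 0 ((m : ℤ) - |aLine m g (j : ℕ) - aLine m g (i : ℕ) + 1|) else 0)
    else 0

/-- the number of descents of the word `w` -/
def desNum (n : ℕ) (w : Fin n → Fin n) : ℕ :=
  ((Finset.range (n-1)).filter fun i =>
    ∃ hj : i + 1 < n, w ⟨i+1, hj⟩ < w ⟨i, Nat.lt_of_succ_lt hj⟩).card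

/-- the major index of the word `w` (with positions 1-indexed as usual) -/
def majStat (n : ℕ) (w : Fin n → Fin n) : ℕ :=
  ∑ i ∈ (Finset.range (n-1)).filter (fun i =>
    ∃ hj : i + 1 < n, w ⟨i+1, hj⟩ < w ⟨i, Nat.lt_of_succ_lt hj⟩), (i+1)

/-- the reading word of a labelled path in an `n × mn` grid: labels are read along
diagonals parallel to the main diagonal, starting with the farthest diagonal,
each diagonal being read from top-right to bottom-left. -/
def readWord (n m : ℕ) (g : List Step) (lab : ℕ → ℕ) : List ℕ :=
  ((List.range (m * n + 1)).map fun k =>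
    (((List.range n).reverse.filter fun i => aLine m g i = (m * n : ℤ) - k).map lab)).flatten

/-- the labelling function `ℕ → ℕ` associated to a permutation of `Fin n` -/
def labOf {n : ℕ} (w : Fin n → Fin n) : ℕ → ℕ :=
  fun i => if h : i < n then (w ⟨i, h⟩ : ℕ) else 0

/-- one step of the algorithm `φ`, on the reversed word: find the rightmost
(i.e. first in the reversed word) east step not followed by an east step,
and swap it with the letter following it. -/
def phiRevAux : List Step → List Step
  | a :: E :: t => if a ≠ E then E :: a :: t else a :: phiRevAux (E :: t)
  | a :: t => a :: phiRevAux t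
  | [] => []

/-- one step of the algorithm `φ` -/
def phiStep (w : List Step) : List Step := (phiRevAux w.reverse).reverse

/-- the sequence `φ(γ) = (γ₀, γ₁, …, γ_{bounce γ})` produced by the algorithm -/
def phiSeq (g : List Step) : List (List Step) :=
  (List.range (bounce g + 1)).map fun i => phiStep^[i] g

/-- the union of all sequences `φ(γ)` over area-0 Schröder paths with `n` blocks -/
def phiUniv (n : ℕ) : Set (List Step) :=
  {p | ∃ g, IsNED g ∧ cnt N g + cnt D g = n ∧ p ∈ phiSeq g}

/-- the map replacing each block `NE` by `N` and each `D` by `E` -/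
def theta : List Step → List Step
  | N :: E :: w => N :: theta w
  | D :: w => E :: theta w
  | _ :: w => theta w
  | [] => []

/-- the cells of the hook-shaped Young diagram `(d, 1^{n-d})` (row 0 is the arm). -/
def hookCells (n d : ℕ) : Finset (ℕ × ℕ) :=
  ((Finset.range d).image fun c => ((0 : ℕ), c)) ∪
    ((Finset.range (n - d + 1)).image fun r => (r, (0 : ℕ)))

/-- a standard Young tableau of hook shape `(d, 1^{n-d})`: `pos i` is the cell
`(row, column)` containing the entry `i+1`; entries increase along rows and columns. -/
structure HookSYT (n d : ℕ) where
  pos : Fin n → ℕ × ℕ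
  mem : ∀ i, pos i ∈ hookCells n d
  inj : Function.Injective pos
  rowInc : ∀ i j : Fin n, (pos i).1 = (pos j).1 → (pos i).2 < (pos j).2 → i < j
  colInc : ∀ i j : Fin n, (pos i).2 = (pos j).2 → (pos i).1 < (pos j).1 → i < j

/-- the descent set of a standard Young tableau: entries `i ∈ {1, …, n-1}` such that
the entry `i+1` lies in a strictly higher row than `i`. -/
def Des {n d : ℕ} (τ : HookSYT n d) : Finset ℕ :=
  (Finset.Icc 1 (n-1)).filter fun i =>
    ∃ hi : i < n, ∃ hi' : i - 1 < n, (τ.pos ⟨i - 1, hi'⟩).1 < (τ.pos ⟨i, hi⟩).1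

/-- the major index of a standard Young tableau -/
def majT {n d : ℕ} (τ : HookSYT n d) : ℕ := ∑ i ∈ Des τ, i

/-- the number of descents of a standard Young tableau -/
def desT {n d : ℕ} (τ : HookSYT n d) : ℕ := (Des τ).card

/-- the maximum of the descent set -/
def maxDes {n d : ℕ} (τ : HookSYT n d) : ℕ := (Des τ).sup id

/-- the map `M_{n,d}`: the path `γ₁γ₂⋯γₙ` with `γₙ = NE`, `γ_{n-i} = NE` if
`i ∈ Des τ` and `γ_{n-i} = D` otherwise -/
def Mmap (n d : ℕ) (τ : HookSYT n d) : List Step :=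
  (((List.range n).map fun j =>
    if j = n - 1 then [N, E]
    else if (n - 1 - j) ∈ Des τ then [N, E] else [D])).flatten

/-- the map `S_{n,d}`: the path `γ₁⋯γ_{n-1}` with `γ_{n-i} = NNEE` if
`i = max Des τ` and `1 ∈ Des τ`, `γ_{n-i} = NDE` if `i = max Des τ` and
`1 ∉ Des τ`, `γ_{n-i} = NE` if `i = 1` or `i ∈ Des τ ∖ {max Des τ}`, and
`γ_{n-i} = D` otherwise. -/
def Smap (n d : ℕ) (τ : HookSYT n d) : List Step :=
  (((List.range (n-1)).map fun j =>
    if (n - 1 - j) = maxDes τ then (if 1 ∈ Des τ then [N,N,E,E] else [N,D,E])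
    else if (n - 1 - j) = 1 ∨ (n - 1 - j) ∈ Des τ then [N,E] else [D])).flatten

/-- the set `V_{n,d}` of Schröder paths of the form `Dʲ NNEE u` or `Dʲ NDE u`
with `u ∈ {NE,D}* NE`, having `n-d+1` north steps and `d-1` diagonal steps. -/
def Vset (n d : ℕ) : Set (List Step) :=
  {g | (∃ j u, IsNED u ∧
      (g = List.replicate j D ++ [N,N,E,E] ++ (u ++ [N,E]) ∨
       g = List.replicate j D ++ [N,D,E] ++ (u ++ [N,E]))) ∧
     cnt N g = n - d + 1 ∧ cnt D g = d - 1}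

/-- Schröder paths in an `n × n` grid with `dd` diagonal steps, area `a`,
ending with `NE` -/
def SchT (n dd a : ℕ) : Set (List Step) :=
  {g | IsSchroeder g ∧ cnt D g = dd ∧ cnt N g = n - dd ∧ area g = a ∧ ∃ u, g = u ++ [N, E]}

/-- the 'upper' forms: `Dʲ NNEE γ' NE NE` or `γ' NE Dʲ NNEE γ''` -/
def UpperForm (g : List Step) : Prop :=
  (∃ j u, IsNED u ∧ g = List.replicate j D ++ [N,N,E,E] ++ u ++ [N,E,N,E]) ∨
  (∃ u j v, IsNED u ∧ g = u ++ [N,E] ++ List.replicate j D ++ [N,N,E,E] ++ v)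

/-- the 'lower' forms: `Dʲ NNEE γ' D NE` or `γ' NDE Dʲ NE γ''` -/
def LowerForm (g : List Step) : Prop :=
  (∃ j u, IsNED u ∧ g = List.replicate j D ++ [N,N,E,E] ++ u ++ [D,N,E]) ∨
  (∃ u j v, IsNED u ∧ g = u ++ [N,D,E] ++ List.replicate j D ++ [N,E] ++ v)

/-- the number of distinct columns of the path -/
def Tcols (n : ℕ) (g : List Step) : ℕ :=
  ((Finset.range n).image fun i => eBefore g i).card

/-- the `q`-integer `[k]_q = 1 + q + ⋯ + q^{k-1}` as a polynomial -/
noncomputable def qInt (k : ℕ) : Polynomial ℤ := ∑ i ∈ Finset.range k, Polynomial.X ^ i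

/-- the `q`-factorial `[k]!_q` -/
noncomputable def qFact (k : ℕ) : Polynomial ℤ := ∏ i ∈ Finset.range k, qInt (i+1)

/-!
On the paths in question `ρ` swaps a block for another one with the same area and the same
number of `D` and `E` steps, trading an `N` for a `D`: `NENE ↦ DNE` after a prefix
`Dʲ NNEE γ'`, and `NE Dʲ NNEE ↦ NDE Dʲ NE` after a prefix `γ' ∈ {NE, D}*`. Being a Schröder
path and the area are therefore preserved. The bounce statistic is additive over leading blocks:
a `D` contributes nothing, and a block `Nᵏ Dⁱ Eᵏ` followed by `s` contributes `#D(s) + #E(s)`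
(the bounce path of `Γ` returns to the diagonal right after it, and the diagonal steps above its
peak are those of `s`). So the prefix sees the swapped block only through its numbers of `D`
and `E` steps, and on the swapped blocks themselves the bounce drops by exactly one. The two
kinds of images are told apart by the letter after their first `N`, which makes `ρ` injective.
-/

open List

@[simp] lemma cnt_nil (s : Step) : cnt s [] = 0 := rfl

@[simp] lemma cnt_cons (s a : Step) (w : List Step) :
    cnt s (a :: w) = cnt s w + if a = s then 1 else 0 := by
  simp [cnt, count_cons]

@[simp] lemma cnt_append (s : Step) (u v : List Step) :
    cnt s (u ++ v) = cnt s u + cnt s v := count_append ..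

@[simp] lemma cnt_replicate (s a : Step) (j : ℕ) :
    cnt s (replicate j a) = if a = s then j else 0 := by
  simp [cnt, count_replicate]

lemma isSchroeder_append {a b : List Step} (ha : IsSchroeder a) (hb : IsSchroeder b) :
    IsSchroeder (a ++ b) := by
  refine ⟨fun p ⟨t, hpt⟩ => ?_, by simp [ha.2, hb.2]⟩
  rcases append_eq_append_iff.1 hpt with ⟨c, rfl, -⟩ | ⟨c, rfl, hc⟩
  · exact ha.1 p (prefix_append p c)
  · have := ha.1 a (prefix_refl a)
    have := hb.1 c ⟨t, hc.symm⟩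
    simp only [cnt_append]
    omega

lemma isSchroeder_append_iff {a b : List Step} (ha : IsSchroeder a) :
    IsSchroeder (a ++ b) ↔ IsSchroeder b := by
  refine ⟨fun h => ⟨fun p hp => ?_, ?_⟩, isSchroeder_append ha⟩
  · have := h.1 (a ++ p) ((prefix_append_right_inj a).2 hp)
    simp only [cnt_append, ha.2] at this
    omega
  · have := h.2
    simp only [cnt_append, ha.2] at this
    omega

lemma isSchroeder_iff_forall_inits (w : List Step) :
    IsSchroeder w ↔ (∀ p ∈ w.inits, cnt E p ≤ cnt N p) ∧ cnt N w = cnt E w := by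
  simp [IsSchroeder, mem_inits]

lemma isSchroeder_NE : IsSchroeder [N, E] := (isSchroeder_iff_forall_inits _).2 (by decide)
lemma isSchroeder_NDE : IsSchroeder [N, D, E] := (isSchroeder_iff_forall_inits _).2 (by decide)
lemma isSchroeder_NNEE : IsSchroeder [N, N, E, E] :=
  (isSchroeder_iff_forall_inits _).2 (by decide)
lemma isSchroeder_D : IsSchroeder [D] := (isSchroeder_iff_forall_inits _).2 (by decide)

lemma IsNED.isSchroeder {u : List Step} (hu : IsNED u) : IsSchroeder u := by
  induction hu with
  | nil => exact (isSchroeder_iff_forall_inits _).2 (by decide)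
  | ne _ ih => exact isSchroeder_append isSchroeder_NE ih
  | d _ ih => exact isSchroeder_append isSchroeder_D ih

lemma isNED_replicate_D (j : ℕ) : IsNED (replicate j D) := by
  induction j with
  | zero => exact IsNED.nil
  | succ j ih => exact IsNED.d ih

lemma areaAux_append (a b : List Step) (h : ℕ) (ha : ∀ p, p <+: a → cnt E p ≤ cnt N p + h) :
    areaAux h (a ++ b) = areaAux h a + areaAux (h + cnt N a - cnt E a) b := by
  induction a generalizing h with
  | nil => simp [areaAux]
  | cons x a ih =>
    have ha' (p) (hp : p <+: a) := ha (x :: p) (cons_prefix_cons.2 ⟨rfl, hp⟩)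
    have hx := ha [x] (cons_prefix_cons.2 ⟨rfl, nil_prefix⟩)
    cases x <;> simp only [cons_append, areaAux, cnt_cons, cnt_nil] at ha' hx ⊢ <;>
      rw [ih _ fun p hp => by grind] <;> grind

lemma area_append {a : List Step} (ha : IsSchroeder a) (b : List Step) :
    area (a ++ b) = area a + area b := by
  rw [area, areaAux_append a b 0 (fun p hp => by simpa using ha.1 p hp), ha.2]
  simp [area]

lemma bounceAux_fuel_congr (g w : List Step) (nn : ℕ) {f₁ f₂ : ℕ} (j : ℕ)
    (h₁ : 1 ≤ f₁) (h₁' : nn - j ≤ f₁) (h₂ : 1 ≤ f₂) (h₂' : nn - j ≤ f₂) :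
    bounceAux g w nn f₁ j = bounceAux g w nn f₂ j := by
  -- the corner `j` strictly increases at every step, so `nn - j` steps of fuel suffice
  induction f₁ generalizing f₂ j with
  | zero => omega
  | succ f ih =>
    obtain ⟨f₂, rfl⟩ : ∃ f', f₂ = f' + 1 := ⟨f₂ - 1, by omega⟩
    simp only [bounceAux]
    split_ifs with hc
    · rfl
    · rw [not_or, not_le, not_le] at hc
      rw [ih (f₂ := f₂) (nBefore w j) (by omega) (by omega) (by omega) (by omega)]

lemma bounceAux_D_cons (g w : List Step) (nn f j : ℕ) :
    bounceAux (D :: g) w nn f j = bounceAux g w nn f j := by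
  induction f generalizing j with
  | zero => rfl
  | succ f ih => simp only [bounceAux, ih]; rfl

lemma cnt_E_filter_ne_D (g : List Step) : cnt E (g.filter (fun s => s ≠ D)) = cnt E g := by
  induction g with
  | nil => rfl
  | cons a w ih => cases a <;> simp_all

lemma bounce_D_cons (g : List Step) : bounce (D :: g) = bounce g := by
  have hE : cnt E (g.filter (fun s => s ≠ D)) ≤ g.length :=
    (cnt_E_filter_ne_D g).symm ▸ count_le_length ..
  have hΓ : (D :: g).filter (fun s => s ≠ D) = g.filter (fun s => s ≠ D) := by simp
  simp only [bounce, hΓ, length_cons, bounceAux_D_cons]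
  split_ifs with h
  · rfl
  · exact bounceAux_fuel_congr _ _ _ 0 (by omega) (by omega) (by omega) (by omega)

lemma bounce_replicate_D_append (j : ℕ) (s : List Step) :
    bounce (replicate j D ++ s) = bounce s := by
  induction j with
  | zero => rfl
  | succ j ih => rw [replicate_succ, cons_append, bounce_D_cons, ih]

def pyramid (k i : ℕ) : List Step := replicate k N ++ replicate i D ++ replicate k E

lemma nBefore_replicate_N_append (k : ℕ) (w : List Step) (j : ℕ) :
    nBefore (replicate k N ++ w) j = k + nBefore w j := by
  induction k with
  | zero => simp
  | succ k ih => simp only [replicate_succ, cons_append, nBefore, ih]; omega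

lemma nBefore_replicate_E_append_add (k : ℕ) (w : List Step) (j : ℕ) :
    nBefore (replicate k E ++ w) (j + k) = nBefore w j := by
  induction k with
  | zero => rfl
  | succ k ih => simpa [replicate_succ, nBefore] using ih

lemma nBefore_replicate_E_append_zero {k : ℕ} (hk : 0 < k) (w : List Step) :
    nBefore (replicate k E ++ w) 0 = 0 := by
  obtain ⟨k, rfl⟩ := Nat.exists_eq_add_of_lt hk
  rfl

lemma dAfterE_replicate_append {s : Step} (hs : s ≠ E) (k : ℕ) (g : List Step) (e : ℕ) :
    dAfterE (replicate k s ++ g) e = dAfterE g e := by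
  induction k with
  | zero => rfl
  | succ k ih => cases s <;> simp_all [replicate_succ, dAfterE]

lemma dAfterE_replicate_E_append_add (k : ℕ) (g : List Step) (j : ℕ) :
    dAfterE (replicate k E ++ g) (j + k + 1) = dAfterE g (j + 1) := by
  induction k with
  | zero => rfl
  | succ k ih => simpa [replicate_succ, dAfterE, ← Nat.add_assoc] using ih

lemma dAfterE_replicate_E_append_one {k : ℕ} (hk : 0 < k) (g : List Step) :
    dAfterE (replicate k E ++ g) 1 = cnt D g := by
  obtain ⟨k, rfl⟩ := Nat.exists_eq_add_of_lt hk
  simp [replicate_succ, dAfterE]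

lemma filter_ne_D_pyramid_append (k i : ℕ) (s : List Step) :
    (pyramid k i ++ s).filter (fun x => x ≠ D) =
      replicate k N ++ replicate k E ++ s.filter (fun x => x ≠ D) := by
  simp [pyramid]

lemma bounceAux_pyramid_append (k i : ℕ) (g w : List Step) (nn f j : ℕ) :
    bounceAux (pyramid k i ++ g) (replicate k N ++ replicate k E ++ w) (nn + k) f (j + k) =
      bounceAux g w nn f j := by
  induction f generalizing j with
  | zero => rfl
  | succ f ih =>
    have hn : nBefore (replicate k N ++ replicate k E ++ w) (j + k) = nBefore w j + k := by
      rw [append_assoc, nBefore_replicate_N_append, nBefore_replicate_E_append_add]; omega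
    have hd : dAfterE (pyramid k i ++ g) (j + k + 1) = dAfterE g (j + 1) := by
      rw [pyramid, append_assoc, append_assoc, dAfterE_replicate_append (by decide),
        dAfterE_replicate_append (by decide), dAfterE_replicate_E_append_add]
    simp only [bounceAux, hn, hd, ih, Nat.add_le_add_iff_right, Nat.add_sub_add_right]

lemma bounce_pyramid_append {k : ℕ} (hk : 0 < k) (i : ℕ) (s : List Step) :
    bounce (pyramid k i ++ s) = cnt D s + cnt E s + bounce s := by
  obtain ⟨f, hf, hfs⟩ : ∃ f, (pyramid k i ++ s).length = f + 1 ∧ s.length ≤ f :=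
    ⟨(pyramid k i ++ s).length - 1, by simp [pyramid]; omega, by simp [pyramid]; omega⟩
  have hEs : cnt E s ≤ s.length := count_le_length ..
  have hE := cnt_E_filter_ne_D s
  simp only [bounce, filter_ne_D_pyramid_append, hf]
  generalize s.filter (fun x => x ≠ D) = w at hE ⊢
  have hnn : cnt E (replicate k N ++ replicate k E ++ w) = cnt E w + k := by simp; omega
  have hn0 : nBefore (replicate k N ++ replicate k E ++ w) 0 = k := by
    rw [append_assoc, nBefore_replicate_N_append, nBefore_replicate_E_append_zero hk, Nat.add_zero]
  have hd1 : dAfterE (pyramid k i ++ s) (0 + 1) = cnt D s := by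
    rw [pyramid, append_assoc, append_assoc, dAfterE_replicate_append (by decide),
      dAfterE_replicate_append (by decide), dAfterE_replicate_E_append_one hk]
  simp only [hnn, if_neg (by omega : cnt E w + k ≠ 0), bounceAux, hn0, hd1]
  by_cases hw : cnt E w = 0
  · simp [hw, ← hE]
  · have hshift := bounceAux_pyramid_append k i s w (cnt E w) f 0
    rw [Nat.zero_add] at hshift
    rw [if_neg (by omega), if_neg hw, hshift,
      bounceAux_fuel_congr s w _ 0 (f₂ := s.length) (by omega) (by omega) (by omega) (by omega)]
    omega

lemma bounce_NE_append (s : List Step) : bounce (N :: E :: s) = cnt D s + cnt E s + bounce s :=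
  bounce_pyramid_append one_pos 0 s

lemma bounce_NDE_append (s : List Step) :
    bounce (N :: D :: E :: s) = cnt D s + cnt E s + bounce s :=
  bounce_pyramid_append one_pos 1 s

lemma bounce_NNEE_append (s : List Step) :
    bounce (N :: N :: E :: E :: s) = cnt D s + cnt E s + bounce s :=
  bounce_pyramid_append two_pos 0 s

lemma IsNED.bounce_append_add {u s t : List Step} (hu : IsNED u)
    (hst : cnt D s + cnt E s = cnt D t + cnt E t) :
    bounce (u ++ s) + bounce t = bounce (u ++ t) + bounce s := by
  induction hu with
  | nil => exact Nat.add_comm _ _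
  | ne _ ih =>
    simp only [cons_append, bounce_NE_append, cnt_append]
    omega
  | d _ ih => simpa only [cons_append, bounce_D_cons] using ih

lemma replicate_D_append_N_inj {j₁ j₂ : ℕ} {x₁ x₂ : List Step}
    (h : replicate j₁ D ++ N :: x₁ = replicate j₂ D ++ N :: x₂) : j₁ = j₂ ∧ x₁ = x₂ := by
  induction j₁ generalizing j₂ with
  | zero => cases j₂ <;> simp_all [replicate_succ]
  | succ j ih =>
    cases j₂ with
    | zero => simp [replicate_succ] at h
    | succ j₂ => simpa [replicate_succ] using ih (by simpa [replicate_succ] using h)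

lemma IsNED.append_N_inj {u₁ u₂ x₁ x₂ : List Step} {a b : Step} (hu₁ : IsNED u₁)
    (hu₂ : IsNED u₂) (ha : a ≠ E) (hb : b ≠ E) (h : u₁ ++ N :: a :: x₁ = u₂ ++ N :: b :: x₂) :
    u₁ = u₂ ∧ a = b ∧ x₁ = x₂ := by
  induction hu₁ generalizing u₂ with
  | nil => cases hu₂ <;> simp_all
  | ne _ ih =>
    cases hu₂ with
    | nil => simp_all
    | ne hw => simpa using ih hw (by simpa using h)
    | d => simp at h
  | d _ ih =>
    cases hu₂ with
    | nil => simp_all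
    | ne => simp at h
    | d hw => simpa using ih hw (by simpa using h)

/-- `g' = ρ(g)` by one of the two rules defining `ρ`. -/
def RhoPair (g g' : List Step) : Prop :=
  (∃ j u, IsNED u ∧ g = replicate j D ++ [N,N,E,E] ++ u ++ [N,E,N,E] ∧
      g' = replicate j D ++ [N,N,E,E] ++ u ++ [D,N,E]) ∨
  (∃ u j v, IsNED u ∧ g = u ++ [N,E] ++ replicate j D ++ [N,N,E,E] ++ v ∧
      g' = u ++ [N,D,E] ++ replicate j D ++ [N,E] ++ v)

lemma UpperForm.exists_rhoPair {g : List Step} (h : UpperForm g) : ∃ g', RhoPair g g' := by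
  rcases h with ⟨j, u, hu, rfl⟩ | ⟨u, j, v, hu, rfl⟩
  · exact ⟨_, .inl ⟨j, u, hu, rfl, rfl⟩⟩
  · exact ⟨_, .inr ⟨u, j, v, hu, rfl, rfl⟩⟩

lemma LowerForm.exists_rhoPair {g' : List Step} (h : LowerForm g') : ∃ g, RhoPair g g' := by
  rcases h with ⟨j, u, hu, rfl⟩ | ⟨u, j, v, hu, rfl⟩
  · exact ⟨_, .inl ⟨j, u, hu, rfl, rfl⟩⟩
  · exact ⟨_, .inr ⟨u, j, v, hu, rfl, rfl⟩⟩

namespace RhoPair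

variable {g g' : List Step}

lemma upperForm (h : RhoPair g g') : UpperForm g := by
  rcases h with ⟨j, u, hu, rfl, -⟩ | ⟨u, j, v, hu, rfl, -⟩
  · exact .inl ⟨j, u, hu, rfl⟩
  · exact .inr ⟨u, j, v, hu, rfl⟩

lemma lowerForm (h : RhoPair g g') : LowerForm g' := by
  rcases h with ⟨j, u, hu, -, rfl⟩ | ⟨u, j, v, hu, -, rfl⟩
  · exact .inl ⟨j, u, hu, rfl⟩
  · exact .inr ⟨u, j, v, hu, rfl⟩

lemma rho_eq {rho : List Step → List Step}
    (hr1 : ∀ (u : List Step) (j : ℕ) (v : List Step), IsNED u →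
      rho (u ++ [N,E] ++ replicate j D ++ [N,N,E,E] ++ v) =
        u ++ [N,D,E] ++ replicate j D ++ [N,E] ++ v)
    (hr2 : ∀ (j : ℕ) (u : List Step), IsNED u →
      rho (replicate j D ++ [N,N,E,E] ++ u ++ [N,E,N,E]) =
        replicate j D ++ [N,N,E,E] ++ u ++ [D,N,E])
    (h : RhoPair g g') : rho g = g' := by
  rcases h with ⟨j, u, hu, rfl, rfl⟩ | ⟨u, j, v, hu, rfl, rfl⟩
  · exact hr2 j u hu
  · exact hr1 u j v hu

lemma isSchroeder_iff (h : RhoPair g g') : IsSchroeder g ↔ IsSchroeder g' := by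
  rcases h with ⟨j, u, hu, rfl, rfl⟩ | ⟨u, j, v, hu, rfl, rfl⟩
  · simp only [append_assoc, isSchroeder_append_iff (isNED_replicate_D j).isSchroeder,
      isSchroeder_append_iff isSchroeder_NNEE, isSchroeder_append_iff hu.isSchroeder]
    exact iff_of_true (IsNED.ne (.ne .nil)).isSchroeder (IsNED.d (.ne .nil)).isSchroeder
  · simp only [append_assoc, isSchroeder_append_iff (isNED_replicate_D j).isSchroeder,
      isSchroeder_append_iff isSchroeder_NNEE, isSchroeder_append_iff hu.isSchroeder,
      isSchroeder_append_iff isSchroeder_NE, isSchroeder_append_iff isSchroeder_NDE]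

lemma area_eq (h : RhoPair g g') : area g = area g' := by
  rcases h with ⟨j, u, hu, rfl, rfl⟩ | ⟨u, j, v, hu, rfl, rfl⟩
  · simp only [append_assoc, area_append (isNED_replicate_D j).isSchroeder,
      area_append isSchroeder_NNEE, area_append hu.isSchroeder]
    rfl
  · simp only [append_assoc, area_append (isNED_replicate_D j).isSchroeder,
      area_append isSchroeder_NNEE, area_append hu.isSchroeder,
      area_append isSchroeder_NE, area_append isSchroeder_NDE]
    have : area [N,E] + area [N,N,E,E] = area [N,D,E] + area [N,E] := rfl
    omega

lemma cnt_D_eq (h : RhoPair g g') : cnt D g' = cnt D g + 1 := by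
  rcases h with ⟨j, u, hu, rfl, rfl⟩ | ⟨u, j, v, hu, rfl, rfl⟩ <;>
    simp <;> omega

lemma cnt_N_eq (h : RhoPair g g') : cnt N g = cnt N g' + 1 := by
  rcases h with ⟨j, u, hu, rfl, rfl⟩ | ⟨u, j, v, hu, rfl, rfl⟩ <;> simp +arith

lemma cnt_N_pos (h : RhoPair g g') : 0 < cnt N g' := by
  rcases h with ⟨j, u, hu, -, rfl⟩ | ⟨u, j, v, hu, -, rfl⟩ <;> simp

lemma bounce_eq (h : RhoPair g g') : bounce g = bounce g' + 1 := by
  rcases h with ⟨j, u, hu, rfl, rfl⟩ | ⟨u, j, v, hu, rfl, rfl⟩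
  · have hu' := hu.bounce_append_add (s := [N,E,N,E]) (t := [D,N,E]) rfl
    have h₁ : bounce [N,E,N,E] = 1 := rfl
    have h₀ : bounce [D,N,E] = 0 := rfl
    simp [bounce_replicate_D_append, bounce_NNEE_append]
    omega
  · have hu' := hu.bounce_append_add (s := N :: E :: (replicate j D ++ N :: N :: E :: E :: v))
      (t := N :: D :: E :: (replicate j D ++ N :: E :: v)) (by simp; omega)
    simp [bounce_NE_append, bounce_NDE_append, bounce_replicate_D_append,
      bounce_NNEE_append] at hu' ⊢
    omega

lemma left_unique {g₁ g₂ : List Step} (h₁ : RhoPair g₁ g') (h₂ : RhoPair g₂ g') : g₁ = g₂ := by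
  rcases h₁ with ⟨j₁, u₁, hu₁, rfl, rfl⟩ | ⟨u₁, j₁, v₁, hu₁, rfl, rfl⟩ <;>
    rcases h₂ with ⟨j₂, u₂, hu₂, rfl, h⟩ | ⟨u₂, j₂, v₂, hu₂, rfl, h⟩ <;>
    simp only [append_assoc, cons_append, nil_append] at h
  · obtain ⟨rfl, h⟩ := replicate_D_append_N_inj h
    simp_all
  · exact absurd ((isNED_replicate_D j₁).append_N_inj hu₂ (by decide) (by decide) h).2.1
      (by decide)
  · exact absurd (hu₁.append_N_inj (isNED_replicate_D j₂) (by decide) (by decide) h).2.1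
      (by decide)
  · obtain ⟨rfl, -, h⟩ := hu₁.append_N_inj hu₂ (by decide) (by decide) h
    simp only [cons.injEq, true_and] at h
    obtain ⟨rfl, h⟩ := replicate_D_append_N_inj h
    simp_all

lemma mem_iff (h : RhoPair g g') (n d : ℕ) :
    (IsSchroeder g ∧ area g = 1 ∧ cnt D g = d ∧ cnt N g = n - d ∧ UpperForm g) ↔
      (IsSchroeder g' ∧ area g' = 1 ∧ cnt D g' = d + 1 ∧ cnt N g' = n - (d + 1) ∧
        LowerForm g') := by
  have hD := h.cnt_D_eq
  have hN := h.cnt_N_eq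
  have hN' := h.cnt_N_pos
  rw [h.isSchroeder_iff, h.area_eq, iff_true_intro h.upperForm, iff_true_intro h.lowerForm]
  constructor <;> rintro ⟨hs, ha, hd, hn, -⟩ <;> exact ⟨hs, ha, by omega, by omega, trivial⟩

end RhoPair

theorem stmt18_general (n d : ℕ)
    (rho : List Step → List Step)
    (hr1 : ∀ (u : List Step) (j : ℕ) (v : List Step), IsNED u →
      rho (u ++ [N,E] ++ List.replicate j D ++ [N,N,E,E] ++ v) =
        u ++ [N,D,E] ++ List.replicate j D ++ [N,E] ++ v)
    (hr2 : ∀ (j : ℕ) (u : List Step), IsNED u →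
      rho (List.replicate j D ++ [N,N,E,E] ++ u ++ [N,E,N,E]) =
        List.replicate j D ++ [N,N,E,E] ++ u ++ [D,N,E]) :
    Set.BijOn rho
      {g | IsSchroeder g ∧ area g = 1 ∧ cnt D g = d ∧ cnt N g = n - d ∧ UpperForm g}
      {g | IsSchroeder g ∧ area g = 1 ∧ cnt D g = d + 1 ∧ cnt N g = n - (d+1) ∧
        LowerForm g} ∧
    ∀ g ∈ {g | IsSchroeder g ∧ area g = 1 ∧ cnt D g = d ∧ cnt N g = n - d ∧ UpperForm g},
      bounce (rho g) = bounce g - 1 := by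
  have hrho {g g'} (h : RhoPair g g') : rho g = g' := h.rho_eq hr1 hr2
  refine ⟨⟨fun g hg => ?_, fun g₁ hg₁ g₂ hg₂ heq => ?_, fun g' hg' => ?_⟩, fun g hg => ?_⟩
  · obtain ⟨g', hp⟩ := hg.2.2.2.2.exists_rhoPair
    exact hrho hp ▸ (hp.mem_iff n d).1 hg
  · obtain ⟨g₁', hp₁⟩ := hg₁.2.2.2.2.exists_rhoPair
    obtain ⟨g₂', hp₂⟩ := hg₂.2.2.2.2.exists_rhoPair
    rw [hrho hp₁, hrho hp₂] at heq
    exact hp₁.left_unique (heq ▸ hp₂)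
  · obtain ⟨g, hp⟩ := hg'.2.2.2.2.exists_rhoPair
    exact ⟨g, (hp.mem_iff n d).2 hg', hrho hp⟩
  · obtain ⟨g', hp⟩ := hg.2.2.2.2.exists_rhoPair
    rw [hrho hp, hp.bounce_eq, Nat.add_sub_cancel]

/-- For `0 ≤ d ≤ n-1`, the map `ρ_{n,d}` (here any `rho` satisfying its
defining equations) is a bijection from the 'upper' area-1 Schröder paths with `d`
diagonal steps onto the 'lower' area-1 Schröder paths with `d+1` diagonal steps, and
`bounce(ρ_{n,d}(γ)) = bounce(γ) - 1`. -/
theorem stmt18 (n d : ℕ) (hd : d ≤ n - 1)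
    (rho : List Step → List Step)
    (hr1 : ∀ (u : List Step) (j : ℕ) (v : List Step), IsNED u →
      rho (u ++ [N,E] ++ List.replicate j D ++ [N,N,E,E] ++ v) =
        u ++ [N,D,E] ++ List.replicate j D ++ [N,E] ++ v)
    (hr2 : ∀ (j : ℕ) (u : List Step), IsNED u →
      rho (List.replicate j D ++ [N,N,E,E] ++ u ++ [N,E,N,E]) =
        List.replicate j D ++ [N,N,E,E] ++ u ++ [D,N,E]) :
    Set.BijOn rho
      {g | IsSchroeder g ∧ area g = 1 ∧ cnt D g = d ∧ cnt N g = n - d ∧ UpperForm g}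
      {g | IsSchroeder g ∧ area g = 1 ∧ cnt D g = d + 1 ∧ cnt N g = n - (d+1) ∧
        LowerForm g} ∧
    ∀ g ∈ {g | IsSchroeder g ∧ area g = 1 ∧ cnt D g = d ∧ cnt N g = n - d ∧ UpperForm g},
      bounce (rho g) = bounce g - 1 :=
  stmt18_general n d rho hr1 hr2
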